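/- Let σ be a density matrix on ℂ²⊗ℂ²⊗ℂ^{d}⊗ℂ^{d'} (factors A,B,A',B') written as σ = Σ_{i,j,k,l∈{0,1}}|ij⟩⟨kl|⊗A_{ijkl}. Suppose 0 < ε < 1 and there exists a private bit γ on the same space, i.e. γ = (1/2)Σ_{i,j∈{0,1}}|ii⟩⟨jj|⊗U_i τ U_j† for some density matrix τ on ℂ^{d}⊗ℂ^{d'} and unitaries U_0, U_1, such that ‖σ − γ‖₁ ≤ ε. Then ‖A_{0011}‖₁ ≥ 1/2 − ε. -/

import Mathlib

open Matrix Kronecker BigOperators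
open scoped ComplexOrder Classical

/-- Total matrix square root: `PosSemidef.sqrt` on positive semidefinite matrices,
junk value `0` otherwise. -/
noncomputable def sqrtm {n : Type*} [Fintype n] [DecidableEq n] (M : Matrix n n ℂ) :
    Matrix n n ℂ :=
  if h : M.PosSemidef then
    (h.1.eigenvectorUnitary : Matrix n n ℂ) * diagonal ((↑) ∘ (√·) ∘ h.1.eigenvalues) *
      (star h.1.eigenvectorUnitary : Matrix n n ℂ)
  else 0

/-- The trace norm `‖X‖₁ = Tr √(X†X)`. -/
noncomputable def traceNorm {n : Type*} [Fintype n] [DecidableEq n] (X : Matrix n n ℂ) : ℝ :=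
  ((sqrtm (Xᴴ * X)).trace).re

/-- The block `A_{ijkl}` of a matrix on `(ℂ²⊗ℂ²)⊗(ℂ^d⊗ℂ^{d'})`. -/
def blk {dA dB : ℕ}
    (σ : Matrix ((Fin 2 × Fin 2) × (Fin dA × Fin dB)) ((Fin 2 × Fin 2) × (Fin dA × Fin dB)) ℂ)
    (p q : Fin 2 × Fin 2) : Matrix (Fin dA × Fin dB) (Fin dA × Fin dB) ℂ :=
  Matrix.of fun s t => σ (p, s) (q, t)

/-- A private bit (pbit): `γ = (1/2) Σ_{i,j∈{0,1}} |ii⟩⟨jj| ⊗ U_i τ U_j†`. -/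
noncomputable def pbit {dA dB : ℕ} (τ : Matrix (Fin dA × Fin dB) (Fin dA × Fin dB) ℂ)
    (U : Fin 2 → Matrix (Fin dA × Fin dB) (Fin dA × Fin dB) ℂ) :
    Matrix ((Fin 2 × Fin 2) × (Fin dA × Fin dB)) ((Fin 2 × Fin 2) × (Fin dA × Fin dB)) ℂ :=
  ∑ i : Fin 2, ∑ j : Fin 2, ((1 : ℂ) / 2) •
    (Matrix.single (i, i) (j, j) (1 : ℂ) ⊗ₖ (U i * τ * (U j)ᴴ))

/-! ### Auxiliary lemmas -/

lemma traceNorm_neg' {n : Type*} [Fintype n] [DecidableEq n] (X : Matrix n n ℂ) :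
    traceNorm (-X) = traceNorm X := by
  simp [traceNorm, Matrix.conjTranspose_neg, neg_mul_neg]

/-- The key duality bound: for a unitary `C`, `Re (tr (C X)) ≤ ‖X‖₁`. -/
lemma re_trace_unitary_mul_le {n : Type*} [Fintype n] [DecidableEq n]
    (C X : Matrix n n ℂ) (hC : C ∈ Matrix.unitaryGroup n ℂ) :
    ((C * X).trace).re ≤ traceNorm X := by
  classical
  have hM : (Xᴴ * X).PosSemidef := Matrix.posSemidef_conjTranspose_mul_self X
  set E : Matrix n n ℂ := (hM.1.eigenvectorUnitary : Matrix n n ℂ) with hE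
  set lam : n → ℝ := hM.1.eigenvalues with hlam
  have hEsE : Eᴴ * E = 1 := by
    rw [← Matrix.star_eq_conjTranspose]
    exact Matrix.mem_unitaryGroup_iff'.mp hM.1.eigenvectorUnitary.2
  have hEEs : E * Eᴴ = 1 := by
    rw [← Matrix.star_eq_conjTranspose]
    exact Matrix.mem_unitaryGroup_iff.mp hM.1.eigenvectorUnitary.2
  have hCCs : C * Cᴴ = 1 := by
    rw [← Matrix.star_eq_conjTranspose]; exact Matrix.mem_unitaryGroup_iff.mp hC
  have hspec : Xᴴ * X = E * Matrix.diagonal (RCLike.ofReal ∘ lam) * Eᴴ := by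
    rw [← Matrix.star_eq_conjTranspose]; exact hM.1.spectral_theorem
  have hTN : traceNorm X = ∑ i, Real.sqrt (lam i) := by
    rw [traceNorm, sqrtm, dif_pos hM]
    rw [Matrix.trace_mul_cycle]
    rw [Matrix.star_eq_conjTranspose, ← hE, ← hlam, hEsE, one_mul, Matrix.trace_diagonal]
    simp [Complex.ofReal_re]
  set B : Matrix n n ℂ := Eᴴ * C with hB
  set Y : Matrix n n ℂ := X * E with hY
  have htr : (C * X).trace = (B * Y).trace := by
    rw [hB, hY, Matrix.trace_mul_comm (Eᴴ * C) (X * E),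
      mul_assoc X E, ← mul_assoc E Eᴴ C, hEEs, one_mul, Matrix.trace_mul_comm]
  have hBB : B * Bᴴ = 1 := by
    rw [hB, Matrix.conjTranspose_mul, Matrix.conjTranspose_conjTranspose,
      mul_assoc, ← mul_assoc C Cᴴ E, hCCs, one_mul, hEsE]
  have hBrow : ∀ i, ∑ k, Complex.normSq (B i k) = 1 := by
    intro i
    have h2 : (B * Bᴴ) i i = 1 := by rw [hBB, Matrix.one_apply_eq]
    rw [Matrix.mul_apply] at h2
    simp only [Matrix.conjTranspose_apply, RCLike.star_def, Complex.mul_conj] at h2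
    exact_mod_cast h2
  have hYY : Yᴴ * Y = Matrix.diagonal (RCLike.ofReal ∘ lam) := by
    rw [hY, Matrix.conjTranspose_mul]
    have : Eᴴ * Xᴴ * (X * E) = Eᴴ * (Xᴴ * X) * E := by
      simp only [mul_assoc]
    rw [this, hspec]
    simp only [← mul_assoc]
    rw [hEsE, one_mul, mul_assoc, hEsE, mul_one]
  have hYcol : ∀ i, ∑ k, Complex.normSq (Y k i) = lam i := by
    intro i
    have h2 : (Yᴴ * Y) i i = (lam i : ℂ) := by
      rw [hYY, Matrix.diagonal_apply_eq]; rfl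
    rw [Matrix.mul_apply] at h2
    simp only [Matrix.conjTranspose_apply, RCLike.star_def,
      ← Complex.normSq_eq_conj_mul_self] at h2
    exact_mod_cast h2
  have key : ∀ i, ‖(B * Y) i i‖ ≤ Real.sqrt (lam i) := by
    intro i
    rw [Matrix.mul_apply]
    calc ‖∑ k, B i k * Y k i‖ ≤ ∑ k, ‖B i k * Y k i‖ :=
          norm_sum_le _ _
      _ = ∑ k, ‖B i k‖ * ‖Y k i‖ := by simp [norm_mul]
      _ ≤ Real.sqrt (∑ k, ‖B i k‖ ^ 2) * Real.sqrt (∑ k, ‖Y k i‖ ^ 2) :=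
          Real.sum_mul_le_sqrt_mul_sqrt _ _ _
      _ = Real.sqrt (lam i) := by
          simp only [Complex.sq_norm]
          rw [hBrow i, hYcol i, Real.sqrt_one, one_mul]
  calc ((C * X).trace).re ≤ ‖(C * X).trace‖ := Complex.re_le_norm _
    _ = ‖(B * Y).trace‖ := by rw [htr]
    _ ≤ ∑ i, ‖(B * Y) i i‖ := by
        unfold Matrix.trace; exact norm_sum_le _ _
    _ ≤ ∑ i, Real.sqrt (lam i) := Finset.sum_le_sum (fun i _ => key i)
    _ = traceNorm X := hTN.symm

lemma trace_kron_std_mul {m n : Type*} [Fintype m] [DecidableEq m] [Fintype n] [DecidableEq n]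
    (a b : m) (C : Matrix n n ℂ) (Y : Matrix (m × n) (m × n) ℂ) :
    ((Matrix.single a b (1 : ℂ) ⊗ₖ C) * Y).trace
      = ∑ s : n, ∑ t : n, C s t * Y (b, t) (a, s) := by
  classical
  calc ((Matrix.single a b (1 : ℂ) ⊗ₖ C) * Y).trace
      = ∑ i : m × n, ∑ j : m × n,
          (if a = i.1 ∧ b = j.1 then C i.2 j.2 * Y j i else 0) := by
        simp only [Matrix.trace, Matrix.diag, Matrix.mul_apply]
        refine Finset.sum_congr rfl fun i _ => Finset.sum_congr rfl fun j _ => ?_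
        rcases i with ⟨p, s⟩; rcases j with ⟨q, t⟩
        simp only [Matrix.kroneckerMap_apply, Matrix.single, Matrix.of_apply]
        by_cases h1 : a = p <;> by_cases h2 : b = q <;> simp [h1, h2]
    _ = ∑ i : m × n, (if a = i.1 then ∑ t : n, C i.2 t * Y (b, t) i else 0) := by
        refine Finset.sum_congr rfl fun i _ => ?_
        by_cases h : a = i.1
        · simp only [h, true_and, if_true]
          rw [Fintype.sum_prod_type, Finset.sum_comm]
          simp [Finset.sum_ite_eq', Finset.sum_ite_eq]
        · simp [h]
    _ = ∑ s : n, ∑ t : n, C s t * Y (b, t) (a, s) := by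
        rw [Fintype.sum_prod_type, Finset.sum_comm]
        simp [Finset.sum_ite_eq', Finset.sum_ite_eq]

section Kb

variable {dA dB : ℕ}

/-- `|a⟩⟨b| ⊗ M` on the 4-block space. -/
noncomputable def Kb (a b : Fin 2 × Fin 2) (M : Matrix (Fin dA × Fin dB) (Fin dA × Fin dB) ℂ) :
    Matrix ((Fin 2 × Fin 2) × (Fin dA × Fin dB)) ((Fin 2 × Fin 2) × (Fin dA × Fin dB)) ℂ :=
  Matrix.single a b (1 : ℂ) ⊗ₖ M

lemma Kb_conjT (a b : Fin 2 × Fin 2) (M : Matrix (Fin dA × Fin dB) (Fin dA × Fin dB) ℂ) :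
    (Kb a b M)ᴴ = Kb b a Mᴴ := by
  ext ⟨p, s⟩ ⟨q, t⟩
  by_cases h1 : a = q <;> by_cases h2 : b = p <;>
    simp [Kb, Matrix.conjTranspose_apply, Matrix.kroneckerMap_apply, Matrix.single,
      Matrix.of_apply, h1, h2]

lemma Kb_mul (a b c d : Fin 2 × Fin 2) (M N : Matrix (Fin dA × Fin dB) (Fin dA × Fin dB) ℂ) :
    Kb a b M * Kb c d N = if b = c then Kb a d (M * N) else 0 := by
  rw [Kb, Kb, ← Matrix.mul_kronecker_mul]
  split_ifs with h
  · subst h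
    simp [Kb, Matrix.single_mul_single_same]
  · simp [Matrix.single_mul_single_of_ne, h]

lemma trace_Kb_mul (a b : Fin 2 × Fin 2)
    (C : Matrix (Fin dA × Fin dB) (Fin dA × Fin dB) ℂ)
    (Y : Matrix ((Fin 2 × Fin 2) × (Fin dA × Fin dB)) ((Fin 2 × Fin 2) × (Fin dA × Fin dB)) ℂ) :
    (Kb a b C * Y).trace = (C * blk Y b a).trace := by
  rw [Kb, trace_kron_std_mul]
  simp [Matrix.trace, Matrix.diag, Matrix.mul_apply, blk]

lemma sum_Kb_one :
    Kb (dA := dA) (dB := dB) (0,0) (0,0) 1 + Kb (0,1) (0,1) 1 + Kb (1,0) (1,0) 1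
      + Kb (1,1) (1,1) 1 = 1 := by
  ext ⟨p, s⟩ ⟨q, t⟩
  simp only [Matrix.add_apply, Kb, Matrix.kroneckerMap_apply, Matrix.single,
    Matrix.of_apply, Matrix.one_apply, Prod.mk.injEq, Prod.ext_iff]
  rcases p with ⟨p1, p2⟩; rcases q with ⟨q1, q2⟩
  fin_cases p1 <;> fin_cases p2 <;> fin_cases q1 <;> fin_cases q2 <;>
    simp [Matrix.one_apply]

lemma blk_pbit (τ : Matrix (Fin dA × Fin dB) (Fin dA × Fin dB) ℂ)
    (U : Fin 2 → Matrix (Fin dA × Fin dB) (Fin dA × Fin dB) ℂ) :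
    blk (pbit τ U) (0,0) (1,1) = ((1 : ℂ) / 2) • (U 0 * τ * (U 1)ᴴ) := by
  ext s t
  simp only [pbit, blk, Matrix.of_apply, Matrix.sum_apply, Matrix.smul_apply,
    Matrix.kroneckerMap_apply, Matrix.single, Fin.sum_univ_two, smul_eq_mul,
    Prod.mk.injEq]
  norm_num

end Kb

/-- if a density matrix `σ` on `ℂ²⊗ℂ²⊗ℂ^d⊗ℂ^{d'}` is `ε`-close in trace
norm to some pbit `γ` (with `0 < ε < 1`), then the trace norm of its upper-right block
satisfies `‖A_{0011}‖₁ ≥ 1/2 − ε`. -/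
theorem close_to_pbit_implies_block_norm {dA dB : ℕ}
    (σ : Matrix ((Fin 2 × Fin 2) × (Fin dA × Fin dB)) ((Fin 2 × Fin 2) × (Fin dA × Fin dB)) ℂ)
    (hσ : σ.PosSemidef) (hσtr : σ.trace = 1)
    (ε : ℝ) (hε0 : 0 < ε) (hε1 : ε < 1)
    (τ : Matrix (Fin dA × Fin dB) (Fin dA × Fin dB) ℂ)
    (hτ : τ.PosSemidef) (hτtr : τ.trace = 1)
    (U : Fin 2 → Matrix (Fin dA × Fin dB) (Fin dA × Fin dB) ℂ)
    (hU : ∀ i, U i ∈ Matrix.unitaryGroup (Fin dA × Fin dB) ℂ)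
    (hclose : traceNorm (σ - pbit τ U) ≤ ε) :
    1 / 2 - ε ≤ traceNorm (blk σ ((0 : Fin 2), (0 : Fin 2)) ((1 : Fin 2), (1 : Fin 2))) := by
  classical
  have hU0s : (U 0)ᴴ * U 0 = 1 := by
    rw [← Matrix.star_eq_conjTranspose]; exact Matrix.mem_unitaryGroup_iff'.mp (hU 0)
  have hU0 : U 0 * (U 0)ᴴ = 1 := by
    rw [← Matrix.star_eq_conjTranspose]; exact Matrix.mem_unitaryGroup_iff.mp (hU 0)
  have hU1s : (U 1)ᴴ * U 1 = 1 := by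
    rw [← Matrix.star_eq_conjTranspose]; exact Matrix.mem_unitaryGroup_iff'.mp (hU 1)
  have hU1 : U 1 * (U 1)ᴴ = 1 := by
    rw [← Matrix.star_eq_conjTranspose]; exact Matrix.mem_unitaryGroup_iff.mp (hU 1)
  set V : Matrix (Fin dA × Fin dB) (Fin dA × Fin dB) ℂ := U 1 * (U 0)ᴴ with hVdef
  have hVsV : Vᴴ * V = 1 := by
    rw [hVdef, Matrix.conjTranspose_mul, Matrix.conjTranspose_conjTranspose,
      mul_assoc, ← mul_assoc (U 1)ᴴ (U 1), hU1s, one_mul, hU0]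
  have hVVs : V * Vᴴ = 1 := by
    rw [hVdef, Matrix.conjTranspose_mul, Matrix.conjTranspose_conjTranspose,
      mul_assoc, ← mul_assoc (U 0)ᴴ (U 0), hU0s, one_mul, hU1]
  have hVmem : V ∈ Matrix.unitaryGroup (Fin dA × Fin dB) ℂ := by
    rw [Matrix.mem_unitaryGroup_iff, Matrix.star_eq_conjTranspose]; exact hVVs
  -- the two sign unitaries
  set Bm : Matrix ((Fin 2 × Fin 2) × (Fin dA × Fin dB)) ((Fin 2 × Fin 2) × (Fin dA × Fin dB)) ℂ :=
    Kb (0,0) (1,1) Vᴴ + Kb (0,1) (0,1) 1 + Kb (1,0) (1,0) 1 with hBmdef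
  set Wp := Kb (1,1) (0,0) V + Bm with hWpdef
  set Wm := Kb (1,1) (0,0) V - Bm with hWmdef
  have hWpU : Wpᴴ * Wp = 1 := by
    rw [hWpdef, hBmdef]
    simp only [Matrix.conjTranspose_add, Kb_conjT, Matrix.conjTranspose_one,
      Matrix.conjTranspose_conjTranspose, add_mul, mul_add, Kb_mul]
    norm_num [Prod.ext_iff, hVsV, hVVs]
    have h1 := sum_Kb_one (dA := dA) (dB := dB)
    simp only [Prod.mk_zero_zero, Prod.mk_one_one] at h1 ⊢
    rw [← h1]
    abel
  have hWmU : Wmᴴ * Wm = 1 := by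
    rw [hWmdef, hBmdef]
    simp only [Matrix.conjTranspose_sub, Matrix.conjTranspose_add, Kb_conjT,
      Matrix.conjTranspose_one, Matrix.conjTranspose_conjTranspose, add_mul, mul_add,
      sub_mul, mul_sub, Kb_mul]
    norm_num [Prod.ext_iff, hVsV, hVVs]
    have h1 := sum_Kb_one (dA := dA) (dB := dB)
    simp only [Prod.mk_zero_zero, Prod.mk_one_one] at h1 ⊢
    rw [← h1]
    abel
  set Y := pbit τ U - σ with hYdef
  have hWpmem : Wp ∈ Matrix.unitaryGroup _ ℂ := by
    rw [Matrix.mem_unitaryGroup_iff']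
    rw [Matrix.star_eq_conjTranspose]; exact hWpU
  have hWmmem : Wm ∈ Matrix.unitaryGroup _ ℂ := by
    rw [Matrix.mem_unitaryGroup_iff']
    rw [Matrix.star_eq_conjTranspose]; exact hWmU
  have hYnorm : traceNorm Y ≤ ε := by
    have : Y = -(σ - pbit τ U) := by rw [hYdef, neg_sub]
    rw [this, traceNorm_neg']
    exact hclose
  have hbp : ((Wp * Y).trace).re ≤ ε := le_trans (re_trace_unitary_mul_le _ _ hWpmem) hYnorm
  have hbm : ((Wm * Y).trace).re ≤ ε := le_trans (re_trace_unitary_mul_le _ _ hWmmem) hYnorm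
  have hsum : (Wp * Y).trace + (Wm * Y).trace = 2 * (Kb (1,1) (0,0) V * Y).trace := by
    rw [hWpdef, hWmdef]
    simp only [add_mul, sub_mul, Matrix.trace_add, Matrix.trace_sub]
    ring
  have hVY : (((V * blk Y (0,0) (1,1))).trace).re ≤ ε := by
    have h1 : ((Kb (1,1) (0,0) V * Y).trace).re ≤ ε := by
      have h2 : ((Wp * Y).trace).re + ((Wm * Y).trace).re
          = 2 * ((Kb (1,1) (0,0) V * Y).trace).re := by
        have h3 := congrArg Complex.re hsum
        simp only [Complex.add_re, Complex.mul_re, Complex.re_ofNat, Complex.im_ofNat,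
          zero_mul, mul_zero, sub_zero] at h3
        exact h3
      linarith
    rwa [trace_Kb_mul] at h1
  -- value on the pbit block
  have hblkY : blk Y (0,0) (1,1) = blk (pbit τ U) (0,0) (1,1) - blk σ (0,0) (1,1) := by
    ext s t; simp [blk, hYdef, Matrix.sub_apply]
  have hVg : (V * blk (pbit τ U) (0,0) (1,1)).trace = 1 / 2 := by
    rw [blk_pbit]
    rw [mul_smul_comm, Matrix.trace_smul]
    have h3 : V * (U 0 * τ * (U 1)ᴴ) = U 1 * τ * (U 1)ᴴ := by
      rw [hVdef]
      simp only [mul_assoc]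
      rw [← mul_assoc (U 0)ᴴ (U 0), hU0s, one_mul]
    rw [h3, Matrix.trace_mul_cycle, hU1s, one_mul, hτtr]
    norm_num
  have hVs : ((V * blk σ (0,0) (1,1)).trace).re ≤ traceNorm (blk σ (0,0) (1,1)) :=
    re_trace_unitary_mul_le _ _ hVmem
  have hsplit : (V * blk Y (0,0) (1,1)).trace
      = (1 / 2 : ℂ) - (V * blk σ (0,0) (1,1)).trace := by
    rw [hblkY, mul_sub, Matrix.trace_sub, hVg]
  have hre : (1 : ℝ) / 2 - ((V * blk σ (0,0) (1,1)).trace).re ≤ ε := by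
    rw [hsplit] at hVY
    have h12 : ((1 / 2 : ℂ) - (V * blk σ (0,0) (1,1)).trace).re
        = 1 / 2 - ((V * blk σ (0,0) (1,1)).trace).re := by
      rw [Complex.sub_re]
      norm_num
    rw [h12] at hVY
    exact hVY
  have : (1 : ℝ) / 2 - ε ≤ ((V * blk σ (0,0) (1,1)).trace).re := by linarith
  exact le_trans this hVs
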